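/- In the hexagonal tessellation of ℝ² by unit regular hexagons, the line containing any edge of a hexagon is not contained in the union of the edges of the tessellation; consequently (by the facet-extension criterion) the space of indicator functions of the hexagonal tessellation is not refinable. -/

import Mathlib

/-!
The line `x₁ = √3 / 2` passes through the lattice point `g₁`, the centre of the cell `(1, 0)`.
The hexagon lies in the unit ball of the sup norm and contains `0` in its interior (it contains
the triangle on its alternate vertices, whose centroid is `0`). Hence `g₁` is interior to its own
cell, and it lies in no other cell because no nonzero lattice vector has sup norm at most `1`;
so `g₁` is on no cell boundary.
-/

open Real Set

noncomputable def hexVertex (k : ℕ) : Fin 2 → ℝ := ![cos (k * π / 3), sin (k * π / 3)]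

noncomputable def hexagon : Set (Fin 2 → ℝ) := convexHull ℝ {p | ∃ k : Fin 6, p = hexVertex k}

lemma hexVertex_zero : hexVertex 0 = ![1, 0] := by
  simp [hexVertex]

lemma hexVertex_two : hexVertex 2 = ![-(1 / 2), √3 / 2] := by
  have h : (2 : ℝ) * π / 3 = π - π / 3 := by ring
  simp [hexVertex, h, cos_pi_sub, sin_pi_sub, cos_pi_div_three, sin_pi_div_three]

lemma hexVertex_four : hexVertex 4 = ![-(1 / 2), -(√3 / 2)] := by
  have h : (4 : ℝ) * π / 3 = π / 3 + π := by ring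
  simp [hexVertex, h, cos_add_pi, sin_add_pi, cos_pi_div_three, sin_pi_div_three]

lemma norm_hexVertex_le_one (k : ℕ) : ‖hexVertex k‖ ≤ 1 := by
  refine (pi_norm_le_iff_of_nonneg zero_le_one).2 fun i => ?_
  fin_cases i
  · simpa [hexVertex] using abs_cos_le_one _
  · simpa [hexVertex] using abs_sin_le_one _

lemma hexagon_subset_closedBall : hexagon ⊆ Metric.closedBall 0 1 :=
  convexHull_min (by rintro _ ⟨k, rfl⟩; simpa using norm_hexVertex_le_one k)
    (convex_closedBall 0 1)

lemma isCompact_hexagon : IsCompact hexagon := by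
  have : {p | ∃ k : Fin 6, p = hexVertex k} = range fun k : Fin 6 => hexVertex k := by
    ext; simp [eq_comm]
  rw [hexagon, this]
  exact (finite_range _).isCompact_convexHull (𝕜 := ℝ)

lemma AffineIndependent.centroid_mem_interior_convexHull {ι V : Type*} [Fintype ι]
    [NormedAddCommGroup V] [NormedSpace ℝ V] [FiniteDimensional ℝ V] {p : ι → V}
    (hp : AffineIndependent ℝ p) (hcard : Fintype.card ι = Module.finrank ℝ V + 1) :
    Finset.univ.centroid ℝ p ∈ interior (convexHull ℝ (range p)) :=
  (AffineBasis.mk p hp (hp.affineSpan_eq_top_iff_card_eq_finrank_add_one.2 hcard)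
    ).centroid_mem_interior_convexHull

noncomputable def hexTriangle (i : Fin 3) : Fin 2 → ℝ := hexVertex (2 * i)

lemma hexTriangle_eq :
    hexTriangle = ![![1, 0], ![-(1 / 2), √3 / 2], ![-(1 / 2), -(√3 / 2)]] := by
  ext i : 1
  fin_cases i
  · exact hexVertex_zero
  · exact hexVertex_two
  · exact hexVertex_four

lemma affineIndependent_hexTriangle : AffineIndependent ℝ hexTriangle := by
  refine (affineIndependent_iff_of_fintype ℝ _).2 fun w hw hwv i => ?_
  rw [Finset.univ.weightedVSub_eq_linear_combination hw] at hwv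
  rw [Fin.sum_univ_three] at hwv hw
  have h0 : w 0 - w 1 / 2 - w 2 / 2 = 0 := by
    simpa [hexTriangle_eq, sub_eq_add_neg, div_eq_mul_inv] using congrFun hwv 0
  have h1 : w 1 * (√3 / 2) - w 2 * (√3 / 2) = 0 := by
    simpa [hexTriangle_eq, sub_eq_add_neg] using congrFun hwv 1
  have hw12 : w 1 = w 2 := mul_right_cancel₀ (by positivity) (sub_eq_zero.1 h1)
  fin_cases i <;> dsimp <;> linarith

lemma centroid_hexTriangle : Finset.univ.centroid ℝ hexTriangle = 0 := by
  rw [Finset.centroid_def, Finset.affineCombination_eq_linear_combination _ _ _ (by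
      simp [Finset.centroidWeights_apply])]
  rw [Fin.sum_univ_three]
  ext j
  fin_cases j <;> simp [hexTriangle_eq, Finset.centroidWeights_apply]; ring

lemma zero_mem_interior_hexagon : (0 : Fin 2 → ℝ) ∈ interior hexagon := by
  have hsub : range hexTriangle ⊆ {p | ∃ k : Fin 6, p = hexVertex k} := by
    rintro _ ⟨i, rfl⟩
    exact ⟨⟨2 * i, by omega⟩, rfl⟩
  rw [← centroid_hexTriangle]
  exact interior_mono (convexHull_mono hsub)
    (affineIndependent_hexTriangle.centroid_mem_interior_convexHull (by simp))

lemma Int.eq_zero_of_abs_mul_le_one {n : ℤ} {c : ℝ} (hc : 1 < c) (h : |(n : ℝ) * c| ≤ 1) :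
    n = 0 := by
  by_contra hn
  have h1 : (1 : ℝ) ≤ |(n : ℝ)| := by exact_mod_cast Int.one_le_abs hn
  rw [abs_mul, abs_of_pos (by linarith : (0 : ℝ) < c)] at h
  nlinarith

lemma hexLattice_eq_zero_of_norm_le_one {a b : ℤ}
    (h : ‖(a : ℝ) • ![3 / 2, √3 / 2] + (b : ℝ) • ![3 / 2, -(√3 / 2)]‖ ≤ 1) : a = 0 ∧ b = 0 := by
  have hab : a + b = 0 := Int.eq_zero_of_abs_mul_le_one (c := 3 / 2) (by norm_num)
    (le_of_eq_of_le (congrArg abs (by simp; ring)) ((norm_le_pi_norm _ 0).trans h))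
  obtain rfl : b = -a := by omega
  have ha : a = 0 := Int.eq_zero_of_abs_mul_le_one (c := √3) (by simp [Real.lt_sqrt])
    (le_of_eq_of_le (congrArg abs (by simp; ring)) ((norm_le_pi_norm _ 1).trans h))
  omega

lemma notMem_iUnion_frontier_of_mem_interior {ι X : Type*} [TopologicalSpace X] {s : ι → Set X}
    (hs : ∀ i, IsClosed (s i)) {x : X} {j : ι} (hj : x ∈ interior (s j))
    (hx : ∀ i ≠ j, x ∉ s i) : x ∉ ⋃ i, frontier (s i) := by
  simp only [mem_iUnion, not_exists]
  intro i hi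
  by_cases hij : i = j
  · subst hij
    exact hi.2 hj
  · exact hx i hij ((hs i).frontier_subset hi)

/-- In the hexagonal tessellation of `ℝ²` by unit regular hexagons (the Voronoi
tessellation of the lattice generated by `(3/2, √3/2)` and `(3/2, −√3/2)`), the line
through the top edge of the central hexagon is not contained in the union of the
edges (cell boundaries) of the tessellation; indeed, it contains a point in the
interior of some hexagonal cell.  Hence the facet-extension criterion fails. -/
theorem stmt11
    (g₁ g₂ : Fin 2 → ℝ)
    (hg₁ : g₁ = ![3/2, Real.sqrt 3 / 2]) (hg₂ : g₂ = ![3/2, -(Real.sqrt 3 / 2)])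
    (H : Set (Fin 2 → ℝ))
    (hH : H = convexHull ℝ
      {p | ∃ k : Fin 6, p = ![Real.cos ((k : ℕ) * π / 3), Real.sin ((k : ℕ) * π / 3)]})
    (cell : ℤ × ℤ → Set (Fin 2 → ℝ))
    (hcell : cell = fun p => (fun x => x + (p.1 : ℝ) • g₁ + (p.2 : ℝ) • g₂) '' H)
    (line : Set (Fin 2 → ℝ))
    (hline : line = {x | x 1 = Real.sqrt 3 / 2}) :
    (¬ line ⊆ ⋃ p : ℤ × ℤ, frontier (cell p)) ∧
      ∃ x ∈ line, ∃ p : ℤ × ℤ, x ∈ interior (cell p) := by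
  obtain rfl : H = hexagon := hH
  have hg₁_mem : g₁ ∈ line := by simp [hline, hg₁]
  have hclosed (p : ℤ × ℤ) : IsClosed (cell p) := by
    rw [hcell]
    exact (isCompact_hexagon.image (by fun_prop)).isClosed
  have hcenter : g₁ ∈ interior (cell (1, 0)) := by
    have hmap : cell (1, 0) = (· + g₁) '' hexagon := by simp [hcell]
    rw [hmap]
    exact (isOpenMap_add_right g₁).image_interior_subset _
      ⟨0, zero_mem_interior_hexagon, zero_add g₁⟩
  have hother : ∀ p ≠ (1, 0), g₁ ∉ cell p := by
    rintro ⟨a, b⟩ hne hg₁_cell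
    obtain ⟨y, hy, hyg⟩ : g₁ ∈ _ '' hexagon := hcell ▸ hg₁_cell
    have hy' : y = ((1 - a : ℤ) : ℝ) • g₁ + ((-b : ℤ) : ℝ) • g₂ := by
      push_cast; linear_combination (norm := module) hyg
    have := mem_closedBall_zero_iff.1 (hexagon_subset_closedBall hy)
    rw [hy', hg₁, hg₂] at this
    obtain ⟨ha, hb⟩ := hexLattice_eq_zero_of_norm_le_one this
    exact hne (Prod.ext (by omega) (by omega))
  refine ⟨fun hsub => ?_, g₁, hg₁_mem, (1, 0), hcenter⟩
  exact notMem_iUnion_frontier_of_mem_interior hclosed hcenter hother (hsub hg₁_mem)
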